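/- Consider a collection of M real matrices X^{(m)} (m ∈ Fin M) over N entities with dimensions d : Fin N → ℕ and cluster counts k : Fin N → ℕ, where row and column entity assignments r, c : Fin M → Fin N give X^{(m)} the shape d(r(m)) × d(c(m)). For each entity e let J^{[e]} be a real d(e) × k(e) matrix with orthonormal columns (J^{[e]ᵀ} J^{[e]} = I_{k(e)}), and define for each entity e the matrix M^{[e]} = Σ_{m : r(m)=e} (X^{(m)} J^{[c(m)]})(X^{(m)} J^{[c(m)]})ᵀ + Σ_{m : c(m)=e} (X^{(m)ᵀ} J^{[r(m)]})(X^{(m)ᵀ} J^{[r(m)]})ᵀ, and for each matrix m the association A^{(m)} = J^{[r(m)]ᵀ} X^{(m)} J^{[c(m)]}. Then Σ_{e=1}^{N} trace(J^{[e]ᵀ} M^{[e]} J^{[e]}) = 2 Σ_{m=1}^{M} ( ‖X^{(m)}‖_F² − ‖X^{(m)} − J^{[r(m)]} A^{(m)} J^{[c(m)]ᵀ}‖_F² ); consequently, over column-orthonormal J^{[e]}, minimizing the collective tri-factorization reconstruction error Σ_m ‖X^{(m)} − J^{[r(m)]} A^{(m)} J^{[c(m)]ᵀ}‖_F² is equivalent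 to maximizing the collective trace objective Σ_e trace(J^{[e]ᵀ} M^{[e]} J^{[e]}). -/

import Mathlib

/-! With `A = Jᵀ X J'` and `P = J A J'ᵀ`, orthonormality of the columns of `J` and `J'` gives
`tr (Xᵀ P) = tr (Pᵀ P) = tr (Aᵀ A)`, hence `‖X‖² - ‖X - P‖² = tr (Aᵀ A)`. In the trace objective
each `X^{(m)}` contributes this twice: its row entity compresses the first summand of `M^{[r(m)]}`
to `A Aᵀ`, its column entity the second summand of `M^{[c(m)]}` to `Aᵀ A`. -/

open Matrix BigOperators

/-- Squared Frobenius norm of a real matrix: `∑ i, ∑ j, (X i j)^2`. -/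
noncomputable def frobSq {m n : ℕ} (X : Matrix (Fin m) (Fin n) ℝ) : ℝ :=
  ∑ i, ∑ j, (X i j) ^ 2

lemma frobSq_eq_trace {m n : ℕ} (X : Matrix (Fin m) (Fin n) ℝ) :
    frobSq X = trace (Xᵀ * X) := by
  simp only [frobSq, trace, diag, mul_apply, transpose_apply, sq]
  exact Finset.sum_comm

lemma Finset.sum_apply_dite_eq_of_map_zero {ι γ : Type*} [Fintype ι] [DecidableEq ι]
    [AddCommMonoid γ] {β : ι → Type*} [∀ i, Zero (β i)] (f : ∀ i, β i → γ)
    (hf : ∀ i, f i 0 = 0) (i₀ : ι) (b : β i₀) :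
    ∑ i, f i (if h : i₀ = i then h ▸ b else 0) = f i₀ b := by
  rw [Finset.sum_eq_single i₀ (fun i _ hi => by rw [dif_neg (Ne.symm hi), hf])
    (fun h => absurd (Finset.mem_univ i₀) h), dif_pos rfl]

section OrthonormalColumns

variable {R : Type*} [CommRing R] {p q a b : Type*} [Fintype p] [Fintype q] [Fintype a]
  [Fintype b] [DecidableEq a] [DecidableEq b]

lemma trace_transpose_mul_self_sub_tri_projection (X : Matrix p q R) {Jr : Matrix p a R}
    {Jc : Matrix q b R}
    (hJr : Jrᵀ * Jr = 1) (hJc : Jcᵀ * Jc = 1) :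
    trace ((X - Jr * (Jrᵀ * X * Jc) * Jcᵀ)ᵀ * (X - Jr * (Jrᵀ * X * Jc) * Jcᵀ)) =
      trace (Xᵀ * X) - trace ((Jrᵀ * X * Jc)ᵀ * (Jrᵀ * X * Jc)) := by
  set A := Jrᵀ * X * Jc
  set P := Jr * A * Jcᵀ
  have hXP : trace (Xᵀ * P) = trace (Aᵀ * A) := by
    rw [show Xᵀ * P = (Xᵀ * Jr * A) * Jcᵀ by simp only [P, Matrix.mul_assoc],
      trace_mul_comm]
    simp only [A, transpose_mul, transpose_transpose, Matrix.mul_assoc]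
  have hPX : trace (Pᵀ * X) = trace (Aᵀ * A) := by
    rw [← trace_transpose, transpose_mul, transpose_transpose, hXP]
  have hPP : trace (Pᵀ * P) = trace (Aᵀ * A) := by
    have hJrA : Jrᵀ * (Jr * (A * Jcᵀ)) = A * Jcᵀ := by
      rw [← Matrix.mul_assoc, hJr, Matrix.one_mul]
    rw [show Pᵀ * P = Jc * (Aᵀ * A * Jcᵀ) by
        simp only [P, transpose_mul, transpose_transpose, Matrix.mul_assoc, hJrA],
      trace_mul_comm, Matrix.mul_assoc, hJc, Matrix.mul_one]
  simp only [transpose_sub, Matrix.sub_mul, Matrix.mul_sub, trace_sub, hXP, hPX, hPP]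
  ring

end OrthonormalColumns

lemma frobSq_sub_frobSq_tri_projection {p q a b : ℕ} (X : Matrix (Fin p) (Fin q) ℝ)
    {Jr : Matrix (Fin p) (Fin a) ℝ} {Jc : Matrix (Fin q) (Fin b) ℝ}
    (hJr : Jrᵀ * Jr = 1) (hJc : Jcᵀ * Jc = 1) :
    frobSq X - frobSq (X - Jr * (Jrᵀ * X * Jc) * Jcᵀ) =
      trace ((Jrᵀ * X * Jc)ᵀ * (Jrᵀ * X * Jc)) := by
  rw [frobSq_eq_trace, frobSq_eq_trace, trace_transpose_mul_self_sub_tri_projection X hJr hJc]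
  ring

/-- Collective trace identity: for a collection of `M` matrices over `N` entities with
column-orthonormal cluster indicators `J^{[e]}`, weighted distance matrices `M^{[e]}` and
associations `A^{(m)} = J^{[r(m)]ᵀ} X^{(m)} J^{[c(m)]}`, we have
`Σ_e trace(J^{[e]ᵀ} M^{[e]} J^{[e]}) = 2 Σ_m (‖X^{(m)}‖_F² − ‖X^{(m)} − J^{[r(m)]} A^{(m)} J^{[c(m)]ᵀ}‖_F²)`,
so minimizing the collective reconstruction error is equivalent to maximizing the collective
trace objective. -/
theorem collective_trace_eq_reconstruction {M N : ℕ}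
    (d k : Fin N → ℕ) (r c : Fin M → Fin N)
    (X : ∀ m : Fin M, Matrix (Fin (d (r m))) (Fin (d (c m))) ℝ)
    (J : ∀ e : Fin N, Matrix (Fin (d e)) (Fin (k e)) ℝ)
    (hJ : ∀ e : Fin N, (J e)ᵀ * J e = 1)
    (Mm : ∀ e : Fin N, Matrix (Fin (d e)) (Fin (d e)) ℝ)
    (hMm : ∀ e : Fin N, Mm e =
      (∑ m : Fin M, if h : r m = e then
          h ▸ ((X m * J (c m)) * (X m * J (c m))ᵀ) else 0)
      + (∑ m : Fin M, if h : c m = e then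
          h ▸ (((X m)ᵀ * J (r m)) * ((X m)ᵀ * J (r m))ᵀ) else 0))
    (A : ∀ m : Fin M, Matrix (Fin (k (r m))) (Fin (k (c m))) ℝ)
    (hA : ∀ m : Fin M, A m = (J (r m))ᵀ * X m * J (c m)) :
    ∑ e : Fin N, Matrix.trace ((J e)ᵀ * Mm e * J e) =
      2 * ∑ m : Fin M,
        (frobSq (X m) - frobSq (X m - J (r m) * A m * (J (c m))ᵀ)) := by
  have hzero : ∀ e, trace ((J e)ᵀ * (0 : Matrix (Fin (d e)) (Fin (d e)) ℝ) * J e) = 0 :=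
    fun e => by simp
  have hrow : ∑ e, ∑ m, trace ((J e)ᵀ * (if h : r m = e then
      h ▸ ((X m * J (c m)) * (X m * J (c m))ᵀ) else 0) * J e) = ∑ m, trace ((A m)ᵀ * A m) := by
    refine Finset.sum_comm.trans (Finset.sum_congr rfl fun m _ => ?_)
    rw [Finset.sum_apply_dite_eq_of_map_zero (fun e Y => trace ((J e)ᵀ * Y * J e)) hzero,
      trace_mul_comm (A m)ᵀ, hA m]
    simp only [transpose_mul, transpose_transpose, Matrix.mul_assoc]
  have hcol : ∑ e, ∑ m, trace ((J e)ᵀ * (if h : c m = e then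
      h ▸ (((X m)ᵀ * J (r m)) * ((X m)ᵀ * J (r m))ᵀ) else 0) * J e) =
        ∑ m, trace ((A m)ᵀ * A m) := by
    refine Finset.sum_comm.trans (Finset.sum_congr rfl fun m _ => ?_)
    rw [Finset.sum_apply_dite_eq_of_map_zero (fun e Y => trace ((J e)ᵀ * Y * J e)) hzero, hA m]
    simp only [transpose_mul, transpose_transpose, Matrix.mul_assoc]
  simp only [hMm, Matrix.mul_add, Matrix.add_mul, trace_add, Matrix.mul_sum, Matrix.sum_mul,
    trace_sum, Finset.sum_add_distrib]
  simp only [hrow, hcol, ← two_mul, hA, frobSq_sub_frobSq_tri_projection _ (hJ _) (hJ _)]
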